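/- The permutation w is 321-avoiding if and only if every reduced word for w has the property that between any two occurrences of the same letter i, some letter equal to i-1 and some letter equal to i+1 both occur (equivalently, no reduced word for w contains a subword i, i±1, i in which the two i's are adjacent occurrences of i). In particular, if w is 321-avoiding, then Coxeter–Knuth equivalence on reduced words for w coincides with Knuth equivalence. -/

import Mathlib

/-- The adjacent transposition `s_a = (a, a+1)`, as a permutation of `ℕ` (we use the
letters `1, …, n-1`, permutations act on `{1, …, n}`). -/
def sTrans (a : ℕ) : Equiv.Perm ℕ := Equiv.swap a (a + 1)

/-- The product `s_{a_1} s_{a_2} ⋯` of a word. -/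
def wordProd (L : List ℕ) : Equiv.Perm ℕ := (L.map sTrans).prod

/-- `L` is a reduced word for `w`: a word in the letters `a ≥ 1` whose product of adjacent
transpositions is `w`, of minimal possible length. -/
def IsReducedWordFor (w : Equiv.Perm ℕ) (L : List ℕ) : Prop :=
  (∀ a ∈ L, 1 ≤ a) ∧ wordProd L = w ∧
    ∀ M : List ℕ, (∀ a ∈ M, 1 ≤ a) → wordProd M = w → L.length ≤ M.length

/-- `w` is a permutation of `{1, …, n}`: it fixes everything outside this interval. -/
def IsPermOn (n : ℕ) (w : Equiv.Perm ℕ) : Prop :=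
  ∀ i : ℕ, w i ≠ i → 1 ≤ i ∧ i ≤ n

/-- The strict linear order on crosses: `(i,j) < (i',j')` iff `i < i'`, or `i = i'` and
`j > j'`. -/
def rcLT (p q : ℕ × ℕ) : Prop := p.1 < q.1 ∨ (p.1 = q.1 ∧ q.2 < p.2)

/-- `L` is the listing of the finite set `R` in increasing `rcLT`-order. -/
def IsRCReading (R : Finset (ℕ × ℕ)) (L : List (ℕ × ℕ)) : Prop :=
  L.toFinset = R ∧ L.Chain' rcLT

/-- The word `a_1 a_2 ⋯` with `a_k = i_k + j_k - 1` read off a listing of crosses. -/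
def rcWord (L : List (ℕ × ℕ)) : List ℕ := L.map (fun p => p.1 + p.2 - 1)

/-- `R` is an rc-graph for `w ∈ Sₙ`: a subset of `{(i,j) : i,j ≥ 1, i+j ≤ n}` whose reading
word (in the prescribed linear order) is a reduced word for `w`. -/
def IsRCGraph (n : ℕ) (w : Equiv.Perm ℕ) (R : Finset (ℕ × ℕ)) : Prop :=
  (∀ p ∈ R, 1 ≤ p.1 ∧ 1 ≤ p.2 ∧ p.1 + p.2 ≤ n) ∧
    ∀ L : List (ℕ × ℕ), IsRCReading R L → IsReducedWordFor w (rcWord L)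

/-- The code of `w`: `c_i = #{ j : j > i ∧ w_j < w_i }`. -/
def permCode (n : ℕ) (w : Equiv.Perm ℕ) (i : ℕ) : ℕ :=
  ((Finset.Icc 1 n).filter (fun j => i < j ∧ w j < w i)).card

/-- The bottom rc-graph `R_bot(w) = { (i,j) : 1 ≤ j ≤ c_i(w) }`. -/
def Rbot (n : ℕ) (w : Equiv.Perm ℕ) : Finset (ℕ × ℕ) :=
  ((Finset.Icc 1 n) ×ˢ (Finset.Icc 1 n)).filter (fun p => p.2 ≤ permCode n w p.1)
/-- An elementary Knuth transformation: `… i k j … ~ … k i j …` for `i ≤ j < k`, and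
`… j i k … ~ … j k i …` for `i < j ≤ k`. -/
inductive KnuthStep : List ℕ → List ℕ → Prop
  | k1 (a b : List ℕ) (i j k : ℕ) (h1 : i ≤ j) (h2 : j < k) :
      KnuthStep (a ++ [i, k, j] ++ b) (a ++ [k, i, j] ++ b)
  | k2 (a b : List ℕ) (i j k : ℕ) (h1 : i < j) (h2 : j ≤ k) :
      KnuthStep (a ++ [j, i, k] ++ b) (a ++ [j, k, i] ++ b)

/-- Knuth (plactic) equivalence: the reflexive-symmetric-transitive closure of the
elementary Knuth transformations. -/
def KnuthEquiv : List ℕ → List ℕ → Prop := Relation.EqvGen KnuthStep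
/-- An elementary Coxeter–Knuth transformation: `… i k j … ~ … k i j …` and
`… j i k … ~ … j k i …` for `i < j < k`, together with `… i (i+1) i … ~ … (i+1) i (i+1) …`. -/
inductive CKStep : List ℕ → List ℕ → Prop
  | ck1 (a b : List ℕ) (i j k : ℕ) (h1 : i < j) (h2 : j < k) :
      CKStep (a ++ [i, k, j] ++ b) (a ++ [k, i, j] ++ b)
  | ck2 (a b : List ℕ) (i j k : ℕ) (h1 : i < j) (h2 : j < k) :
      CKStep (a ++ [j, i, k] ++ b) (a ++ [j, k, i] ++ b)
  | ck3 (a b : List ℕ) (i : ℕ) :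
      CKStep (a ++ [i, i + 1, i] ++ b) (a ++ [i + 1, i, i + 1] ++ b)

/-- Coxeter–Knuth (nilplactic) equivalence: the reflexive-symmetric-transitive closure of
the elementary Coxeter–Knuth transformations. -/
def CKEquiv : List ℕ → List ℕ → Prop := Relation.EqvGen CKStep

/-- `w` contains the pattern 321: there are `i < j < k` with `w_i > w_j > w_k`. -/
def Has321 (w : Equiv.Perm ℕ) : Prop :=
  ∃ i j k : ℕ, 1 ≤ i ∧ i < j ∧ j < k ∧ w k < w j ∧ w j < w i

lemma sTrans_apply (a x : ℕ) : sTrans a x = if x = a then a+1 else if x = a+1 then a else x := by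
  simp [sTrans, Equiv.swap_apply_def]
lemma sTrans_mul_self (a : ℕ) : sTrans a * sTrans a = 1 := Equiv.swap_mul_self _ _
set_option maxHeartbeats 1000000 in
lemma sTrans_comm {a b : ℕ} (h : a + 2 ≤ b ∨ b + 2 ≤ a) :
    sTrans a * sTrans b = sTrans b * sTrans a := by
  ext x
  simp only [Equiv.Perm.mul_apply, sTrans_apply]
  split_ifs <;> omega

set_option maxHeartbeats 1000000 in
lemma sTrans_braid (i : ℕ) :
    sTrans i * sTrans (i+1) * sTrans i = sTrans (i+1) * sTrans i * sTrans (i+1) := by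
  ext x
  simp only [Equiv.Perm.mul_apply, sTrans_apply]
  split_ifs <;> omega

lemma wordProd_nil : wordProd [] = 1 := rfl
lemma wordProd_cons (a : ℕ) (L : List ℕ) : wordProd (a :: L) = sTrans a * wordProd L := by
  simp [wordProd]
lemma wordProd_append (A B : List ℕ) : wordProd (A ++ B) = wordProd A * wordProd B := by
  simp [wordProd]
lemma wordProd_singleton (a : ℕ) : wordProd [a] = sTrans a := by simp [wordProd]

----------------- section 2
def InvSet (w : Equiv.Perm ℕ) : Set (ℕ × ℕ) := {p | p.1 < p.2 ∧ w p.2 < w p.1}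
noncomputable def invLen (w : Equiv.Perm ℕ) : ℕ := (InvSet w).ncard
def FSupp (w : Equiv.Perm ℕ) : Prop := ∃ N, ∀ x, w x ≠ x → 1 ≤ x ∧ x ≤ N

lemma sTrans_sTrans (a x : ℕ) : sTrans a (sTrans a x) = x := Equiv.swap_apply_self _ _ _

lemma mul_sTrans_apply (w : Equiv.Perm ℕ) (a x : ℕ) : (w * sTrans a) x = w (sTrans a x) := rfl

lemma fsupp_one : FSupp 1 := ⟨0, fun x hx => absurd rfl hx⟩

lemma fsupp_zero {w : Equiv.Perm ℕ} (h : FSupp w) : w 0 = 0 := by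
  obtain ⟨N, hN⟩ := h
  by_contra h0
  exact absurd (hN 0 h0).1 (by omega)

lemma fsupp_mul_sTrans {w : Equiv.Perm ℕ} {a : ℕ} (h : FSupp w) (ha : 1 ≤ a) :
    FSupp (w * sTrans a) := by
  obtain ⟨N, hN⟩ := h
  refine ⟨max N (a+1), fun x hx => ?_⟩
  rw [mul_sTrans_apply] at hx
  by_cases hxa : x = a
  · subst hxa; constructor <;> omega
  by_cases hxa1 : x = a + 1
  · subst hxa1; constructor <;> omega
  · have : sTrans a x = x := by rw [sTrans_apply]; simp [hxa, hxa1]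
    rw [this] at hx
    exact ⟨(hN x hx).1, le_trans (hN x hx).2 (le_max_left _ _)⟩

lemma fsupp_maps {w : Equiv.Perm ℕ} {N x : ℕ} (hN : ∀ x, w x ≠ x → x ≤ N)
    (hx : x ≤ N) : w x ≤ N := by
  by_contra h
  push_neg at h
  have h1 : w (w x) = w x := by
    by_contra h2
    exact absurd (hN _ h2) (by omega)
  have := w.injective h1
  omega

lemma invSet_finite {w : Equiv.Perm ℕ} (h : FSupp w) : (InvSet w).Finite := by
  obtain ⟨N, hN⟩ := h
  have hN' : ∀ x, w x ≠ x → x ≤ N := fun x hx => (hN x hx).2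
  apply Set.Finite.subset ((Set.finite_Iic N).prod (Set.finite_Iic N))
  rintro ⟨x, y⟩ ⟨hlt, hw⟩
  simp only at hlt hw
  simp only [Set.mem_prod, Set.mem_Iic]
  have hy : y ≤ N := by
    by_contra hy
    push_neg at hy
    have hyfix : w y = y := by
      by_contra h2; exact absurd (hN' _ h2) (by omega)
    rcases le_or_gt x N with hx | hx
    · have := fsupp_maps hN' hx
      omega
    · have hxfix : w x = x := by
        by_contra h2; exact absurd (hN' _ h2) (by omega)
      omega
  exact ⟨by omega, hy⟩

lemma sTrans_lt {a x y : ℕ} (hxy : x < y) (hne : ¬(x = a ∧ y = a + 1)) :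
    sTrans a x < sTrans a y := by
  rw [sTrans_apply, sTrans_apply]
  split_ifs <;> omega


lemma sTrans_a (a : ℕ) : sTrans a a = a + 1 := by rw [sTrans_apply]; simp

lemma sTrans_a1 (a : ℕ) : sTrans a (a+1) = a := by rw [sTrans_apply]; simp

lemma phi_invol (a : ℕ) :
    Function.Involutive (fun p : ℕ × ℕ => (sTrans a p.1, sTrans a p.2)) := by
  intro p; simp [sTrans_sTrans]

lemma mem_invSet {w : Equiv.Perm ℕ} {p : ℕ × ℕ} :
    p ∈ InvSet w ↔ p.1 < p.2 ∧ w p.2 < w p.1 := Iff.rfl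

lemma phi_image_subset {w : Equiv.Perm ℕ} {a : ℕ} :
    (fun p : ℕ × ℕ => (sTrans a p.1, sTrans a p.2)) '' (InvSet w \ {(a, a+1)}) ⊆
      InvSet (w * sTrans a) := by
  rintro ⟨x, y⟩ ⟨⟨u, v⟩, ⟨⟨huv, hwv⟩, hne⟩, heq⟩
  simp only [Prod.mk.injEq] at heq
  obtain ⟨hx, hy⟩ := heq
  subst hx; subst hy
  have hne' : ¬(u = a ∧ v = a + 1) := by
    intro ⟨h1, h2⟩; exact hne (by simp [h1, h2])
  refine ⟨sTrans_lt huv hne', ?_⟩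
  simpa only [mul_sTrans_apply, sTrans_sTrans] using hwv

lemma invSet_mul_sTrans_mem {w : Equiv.Perm ℕ} {a : ℕ} {x y : ℕ}
    (hm : (x, y) ∈ InvSet (w * sTrans a)) (hne : ¬(x = a ∧ y = a + 1)) :
    (x, y) ∈ (fun p : ℕ × ℕ => (sTrans a p.1, sTrans a p.2)) ''
      (InvSet w \ {(a, a+1)}) := by
  obtain ⟨hlt, hw⟩ := hm
  simp only [mul_sTrans_apply] at hw
  refine ⟨(sTrans a x, sTrans a y), ⟨⟨sTrans_lt hlt hne, ?_⟩, ?_⟩, ?_⟩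
  · simpa only [sTrans_sTrans] using hw
  · simp only [Set.mem_singleton_iff, Prod.mk.injEq, not_and]
    intro h1 h2
    have hx : x = a + 1 := by
      have := congrArg (sTrans a) h1; rwa [sTrans_sTrans, sTrans_a] at this
    have hy : y = a := by
      have := congrArg (sTrans a) h2; rwa [sTrans_sTrans, sTrans_a1] at this
    simp only at hlt; omega
  · simp [sTrans_sTrans]

lemma invSet_mul_sTrans_asc {w : Equiv.Perm ℕ} {a : ℕ} (h : w a < w (a+1)) :
    InvSet (w * sTrans a) =
      insert (a, a+1) ((fun p : ℕ × ℕ => (sTrans a p.1, sTrans a p.2)) ''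
        (InvSet w \ {(a, a+1)})) := by
  ext ⟨x, y⟩
  constructor
  · intro hm
    by_cases hpt : x = a ∧ y = a + 1
    · left; simp [hpt.1, hpt.2]
    · right; exact invSet_mul_sTrans_mem hm hpt
  · rintro (hpt | him)
    · simp only [Prod.mk.injEq] at hpt
      obtain ⟨hx, hy⟩ := hpt; subst hx; subst hy
      refine ⟨by omega, ?_⟩
      simp only [mul_sTrans_apply, sTrans_a, sTrans_a1]
      exact h
    · exact phi_image_subset him

lemma invSet_mul_sTrans_desc {w : Equiv.Perm ℕ} {a : ℕ} (h : w (a+1) < w a) :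
    InvSet (w * sTrans a) =
      (fun p : ℕ × ℕ => (sTrans a p.1, sTrans a p.2)) '' (InvSet w \ {(a, a+1)}) := by
  ext ⟨x, y⟩
  constructor
  · intro hm
    by_cases hpt : x = a ∧ y = a + 1
    · exfalso
      obtain ⟨hx, hy⟩ := hpt; subst hx; subst hy
      obtain ⟨_, hw⟩ := hm
      simp only [mul_sTrans_apply, sTrans_a, sTrans_a1] at hw
      omega
    · exact invSet_mul_sTrans_mem hm hpt
  · exact fun him => phi_image_subset him

lemma pt_not_mem_image {w : Equiv.Perm ℕ} {a : ℕ} :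
    (a, a+1) ∉ (fun p : ℕ × ℕ => (sTrans a p.1, sTrans a p.2)) ''
      (InvSet w \ {(a, a+1)}) := by
  rintro ⟨⟨u, v⟩, ⟨⟨huv, _⟩, _⟩, heq⟩
  simp only [Prod.mk.injEq] at heq
  have hu : u = a + 1 := by
    have := congrArg (sTrans a) heq.1; rwa [sTrans_sTrans, sTrans_a] at this
  have hv : v = a := by
    have := congrArg (sTrans a) heq.2; rwa [sTrans_sTrans, sTrans_a1] at this
  simp only at huv; omega

lemma invLen_mul_sTrans_asc {w : Equiv.Perm ℕ} {a : ℕ} (hf : (InvSet w).Finite)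
    (h : w a < w (a+1)) : invLen (w * sTrans a) = invLen w + 1 := by
  have hpt : (a, a+1) ∉ InvSet w := by
    rintro ⟨_, hw⟩; simp only at hw; omega
  have hdiff : InvSet w \ {(a, a+1)} = InvSet w := Set.diff_singleton_eq_self hpt
  rw [invLen, invSet_mul_sTrans_asc h, hdiff,
    Set.ncard_insert_of_notMem (by rw [← hdiff] at *; exact pt_not_mem_image)
      (hf.image _),
    Set.ncard_image_of_injective _ (phi_invol a).injective]
  rfl

lemma invLen_mul_sTrans_desc {w : Equiv.Perm ℕ} {a : ℕ} (hf : (InvSet w).Finite)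
    (h : w (a+1) < w a) : invLen (w * sTrans a) + 1 = invLen w := by
  have hpt : (a, a+1) ∈ InvSet w := ⟨by omega, h⟩
  rw [invLen, invSet_mul_sTrans_desc h,
    Set.ncard_image_of_injective _ (phi_invol a).injective]
  exact Set.ncard_diff_singleton_add_one hpt hf

lemma invLen_one : invLen 1 = 0 := by
  have : InvSet (1 : Equiv.Perm ℕ) = ∅ := by
    ext ⟨x, y⟩
    simp only [mem_invSet, Set.mem_empty_iff_false, iff_false, not_and]
    intro h; simp only [Equiv.Perm.one_apply]; omega
  rw [invLen, this, Set.ncard_empty]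

lemma fsupp_wordProd {L : List ℕ} (hL : ∀ a ∈ L, 1 ≤ a) : FSupp (wordProd L) := by
  induction L with
  | nil => exact fsupp_one
  | cons a L ih =>
    have h1 : 1 ≤ a := hL a (by simp)
    obtain ⟨N, hN⟩ := ih (fun b hb => hL b (by simp [hb]))
    refine ⟨max N (a+1), fun x hx => ?_⟩
    rw [wordProd_cons] at hx
    by_cases hfix : wordProd L x = x
    · have : sTrans a x ≠ x := by
        intro hc
        exact hx (by rw [Equiv.Perm.mul_apply, hfix, hc])
      rw [sTrans_apply] at this
      by_cases hxa : x = a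
      · subst hxa; constructor <;> omega
      · by_cases hxa1 : x = a + 1
        · subst hxa1; constructor <;> omega
        · simp [hxa, hxa1] at this
    · exact ⟨(hN x hfix).1, le_trans (hN x hfix).2 (le_max_left _ _)⟩

lemma invLen_le_length {L : List ℕ} (hL : ∀ a ∈ L, 1 ≤ a) :
    invLen (wordProd L) ≤ L.length := by
  induction L using List.reverseRecOn with
  | nil => simp [wordProd_nil, invLen_one]
  | append_singleton L a ih =>
    have hL' : ∀ b ∈ L, 1 ≤ b := fun b hb => hL b (by simp [hb])
    have hf := invSet_finite (fsupp_wordProd hL')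
    rw [wordProd_append, wordProd_singleton, List.length_append, List.length_singleton]
    rcases lt_trichotomy (wordProd L a) (wordProd L (a+1)) with h | h | h
    · rw [invLen_mul_sTrans_asc hf h]
      have e2 := ih hL'
      omega
    · exact absurd ((wordProd L).injective h) (by omega)
    · have e1 := invLen_mul_sTrans_desc hf h
      have e2 := ih hL'
      omega

lemma exists_descent {w : Equiv.Perm ℕ} (h0 : w 0 = 0) (hne : w ≠ 1) :
    ∃ a, 1 ≤ a ∧ w (a+1) < w a := by
  by_contra hc
  push_neg at hc
  have hmono : StrictMono w := by
    apply strictMono_nat_of_lt_succ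
    intro a
    rcases Nat.eq_zero_or_pos a with rfl | ha
    · rw [h0]
      have : w (0+1) ≠ 0 := by
        intro hc1
        exact absurd (w.injective (hc1.trans h0.symm)) (by omega)
      omega
    · have := hc a ha
      have : w a ≠ w (a+1) := fun hc2 => by
        have := w.injective hc2; omega
      omega
  apply hne
  have hinvmono : StrictMono (w⁻¹ : Equiv.Perm ℕ) := by
    intro a b hab
    by_contra hc2
    push_neg at hc2
    have := hmono.monotone hc2
    simp only [Equiv.Perm.coe_inv, Equiv.apply_symm_apply] at this
    omega
  ext x
  have h1 : x ≤ w x := hmono.le_apply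
  have h2 : x ≤ (w⁻¹ : Equiv.Perm ℕ) x := hinvmono.le_apply
  have h3 := hmono.monotone h2
  simp only [Equiv.Perm.coe_inv, Equiv.apply_symm_apply] at h3
  simp only [Equiv.Perm.one_apply]
  omega

lemma exists_min_word {w : Equiv.Perm ℕ} (hf : FSupp w) :
    ∃ L, (∀ a ∈ L, 1 ≤ a) ∧ wordProd L = w ∧ L.length = invLen w := by
  generalize hk : invLen w = k
  induction k using Nat.strong_induction_on generalizing w with
  | _ k ih =>
    by_cases hw1 : w = 1
    · exact ⟨[], by simp, by rw [wordProd_nil, hw1], by simp [← hk, hw1, invLen_one]⟩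
    · obtain ⟨a, ha, hdesc⟩ := exists_descent (fsupp_zero hf) hw1
      have hfin := invSet_finite hf
      have hlt := invLen_mul_sTrans_desc hfin hdesc
      have hf' := fsupp_mul_sTrans hf ha
      obtain ⟨L, hL1, hL2, hL3⟩ := ih (invLen (w * sTrans a)) (by omega) hf' rfl
      refine ⟨L ++ [a], ?_, ?_, ?_⟩
      · intro b hb
        rcases List.mem_append.mp hb with hb | hb
        · exact hL1 b hb
        · simp at hb; omega
      · rw [wordProd_append, wordProd_singleton, hL2, mul_assoc, sTrans_mul_self,
          mul_one]
      · simp only [List.length_append, List.length_singleton]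
        omega

lemma reduced_iff_len {w : Equiv.Perm ℕ} {L : List ℕ} :
    IsReducedWordFor w L ↔
      (∀ a ∈ L, 1 ≤ a) ∧ wordProd L = w ∧ L.length = invLen w := by
  constructor
  · rintro ⟨h1, h2, h3⟩
    refine ⟨h1, h2, le_antisymm ?_ ?_⟩
    · obtain ⟨M, hM1, hM2, hM3⟩ := exists_min_word (h2 ▸ fsupp_wordProd h1)
      exact hM3 ▸ h3 M hM1 hM2
    · exact h2 ▸ invLen_le_length h1
  · rintro ⟨h1, h2, h3⟩
    refine ⟨h1, h2, fun M hM1 hM2 => ?_⟩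
    rw [h3, ← h2]
    exact h2 ▸ hM2 ▸ invLen_le_length hM1

lemma prefix_lt {w : Equiv.Perm ℕ} {X Y : List ℕ} {r : ℕ}
    (hred : IsReducedWordFor w (X ++ r :: Y)) :
    wordProd X r < wordProd X (r + 1) := by
  obtain ⟨h1, h2, h3⟩ := hred
  set u := wordProd X with hu
  have hX1 : ∀ a ∈ X, 1 ≤ a := fun a ha => h1 a (by simp [ha])
  rcases lt_trichotomy (u r) (u (r+1)) with h | h | h
  · exact h
  · exact absurd (u.injective h) (by omega)
  · exfalso
    have hfin := invSet_finite (fsupp_wordProd hX1)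
    have hdesc := invLen_mul_sTrans_desc hfin h
    have hle := invLen_le_length hX1
    obtain ⟨W, hW1, hW2, hW3⟩ := exists_min_word (fsupp_mul_sTrans (fsupp_wordProd hX1)
      (h1 r (by simp)))
    have hprod : wordProd (W ++ Y) = w := by
      rw [wordProd_append, hW2, ← h2]
      have : wordProd (X ++ r :: Y) = u * sTrans r * wordProd Y := by
        rw [wordProd_append, wordProd_cons, mul_assoc]
      rw [this]
    have hlen := h3 (W ++ Y) (fun a ha => by
      rcases List.mem_append.mp ha with ha | ha
      · exact hW1 a ha
      · exact h1 a (by simp [ha])) hprod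
    simp only [List.length_append, List.length_cons] at hlen
    omega

lemma has321_step {u : Equiv.Perm ℕ} {r : ℕ} (hr : 1 ≤ r) (h : u r < u (r+1))
    (h3 : Has321 u) : Has321 (u * sTrans r) := by
  obtain ⟨p1, p2, p3, hp1, h12, h23, hv32, hv21⟩ := h3
  have key : ∀ x y : ℕ, x < y → u y < u x → sTrans r x < sTrans r y := by
    intro x y hxy hvy
    apply sTrans_lt hxy
    rintro ⟨rfl, rfl⟩
    omega
  refine ⟨sTrans r p1, sTrans r p2, sTrans r p3, ?_, ?_, ?_, ?_, ?_⟩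
  · rw [sTrans_apply]; split_ifs <;> omega
  · exact key p1 p2 h12 hv21
  · exact key p2 p3 h23 hv32
  · simp only [mul_sTrans_apply, sTrans_sTrans]; exact hv32
  · simp only [mul_sTrans_apply, sTrans_sTrans]; exact hv21

lemma has321_of_word_tail {w : Equiv.Perm ℕ} :
    ∀ (Y Z : List ℕ), IsReducedWordFor w (Z ++ Y) → Has321 (wordProd Z) → Has321 w := by
  intro Y
  induction Y with
  | nil =>
    intro Z hred h3
    obtain ⟨_, h2, _⟩ := hred
    rw [List.append_nil] at h2
    exact h2 ▸ h3
  | cons r Y ih =>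
    intro Z hred h3
    have hr : 1 ≤ r := hred.1 r (by simp)
    have hstep : wordProd Z r < wordProd Z (r+1) := prefix_lt hred
    have h3' : Has321 (wordProd (Z ++ [r])) := by
      rw [wordProd_append, wordProd_singleton]
      exact has321_step hr hstep h3
    have hred' : IsReducedWordFor w ((Z ++ [r]) ++ Y) := by
      rwa [List.append_assoc, List.singleton_append]
    exact ih (Z ++ [r]) hred' h3'

lemma braid_lemma {w : Equiv.Perm ℕ} {X Y : List ℕ} {j : ℕ} (hj : 1 ≤ j)
    (hred : IsReducedWordFor w (X ++ [j, j+1, j] ++ Y)) : Has321 w := by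
  have hs_a1 : sTrans j (j+1) = j := sTrans_a1 j
  have hs_a : sTrans j j = j+1 := sTrans_a j
  have hsj2 : sTrans j (j+1+1) = j+1+1 := by rw [sTrans_apply]; split_ifs <;> omega
  have hs1 : sTrans (j+1) j = j := by rw [sTrans_apply]; split_ifs <;> omega
  have hs2 : sTrans (j+1) (j+1) = j+1+1 := sTrans_a _
  have hs3 : sTrans (j+1) (j+1+1) = j+1 := sTrans_a1 _
  have e1 : wordProd X j < wordProd X (j+1) := by
    apply prefix_lt (Y := [j+1, j] ++ Y)
    simpa using hred
  have eb : wordProd (X ++ [j]) = wordProd X * sTrans j := by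
    rw [wordProd_append, wordProd_singleton]
  have ec : wordProd (X ++ [j, j+1]) = wordProd X * sTrans j * sTrans (j+1) := by
    rw [wordProd_append, wordProd_cons, wordProd_singleton, mul_assoc]
  have emid : wordProd (X ++ [j, j+1, j]) =
      wordProd X * sTrans j * sTrans (j+1) * sTrans j := by
    rw [wordProd_append, wordProd_cons, wordProd_cons, wordProd_singleton,
      mul_assoc, mul_assoc]
  have e2 : wordProd (X ++ [j]) (j+1) < wordProd (X ++ [j]) (j+1+1) := by
    apply prefix_lt (Y := [j] ++ Y) (X := X ++ [j])
    have h : X ++ [j, j+1, j] ++ Y = (X ++ [j]) ++ (j+1) :: ([j] ++ Y) := by simp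
    rwa [h] at hred
  rw [eb] at e2
  simp only [Equiv.Perm.mul_apply] at e2
  rw [hs_a1, hsj2] at e2
  have e3 : wordProd (X ++ [j, j+1]) j < wordProd (X ++ [j, j+1]) (j+1) := by
    apply prefix_lt (Y := Y) (X := X ++ [j, j+1])
    have h : X ++ [j, j+1, j] ++ Y = (X ++ [j, j+1]) ++ j :: Y := by simp
    rwa [h] at hred
  rw [ec] at e3
  simp only [Equiv.Perm.mul_apply] at e3
  rw [hs1, hs2, hs_a, hsj2] at e3
  -- e1 : u j < u (j+1), e2 : u j < u (j+2), e3 : u (j+1) < u (j+2)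
  have m1 : wordProd (X ++ [j, j+1, j]) j = wordProd X (j+1+1) := by
    rw [emid]; simp only [Equiv.Perm.mul_apply]; rw [hs_a, hs2, hsj2]
  have m2 : wordProd (X ++ [j, j+1, j]) (j+1) = wordProd X (j+1) := by
    rw [emid]; simp only [Equiv.Perm.mul_apply]; rw [hs_a1, hs1, hs_a]
  have m3 : wordProd (X ++ [j, j+1, j]) (j+1+1) = wordProd X j := by
    rw [emid]; simp only [Equiv.Perm.mul_apply]; rw [hsj2, hs3, hs_a1]
  have h3 : Has321 (wordProd (X ++ [j, j+1, j])) := by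
    refine ⟨j, j+1, j+1+1, hj, by omega, by omega, ?_, ?_⟩
    · rw [m2, m3]; exact e1
    · rw [m1, m2]; exact e3
  exact has321_of_word_tail Y (X ++ [j, j+1, j])
    (by rwa [List.append_assoc] at hred ⊢) h3

lemma comm_seg {i : ℕ} {B : List ℕ} (h : ∀ b ∈ B, b + 2 ≤ i ∨ i + 2 ≤ b) :
    sTrans i * wordProd B = wordProd B * sTrans i := by
  induction B with
  | nil => rw [wordProd_nil, one_mul, mul_one]
  | cons b B ih =>
    have hb := h b (by simp)
    have hcomm : sTrans i * sTrans b = sTrans b * sTrans i :=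
      sTrans_comm (by omega)
    rw [wordProd_cons, ← mul_assoc, hcomm, mul_assoc, ih (fun c hc => h c (by simp [hc])),
      ← mul_assoc]

lemma key_prod {i : ℕ} {A B C : List ℕ} (h : ∀ b ∈ B, b + 2 ≤ i ∨ i + 2 ≤ b) :
    wordProd (A ++ i :: (B ++ C)) = wordProd (A ++ (B ++ i :: C)) := by
  rw [wordProd_append, wordProd_append, wordProd_cons, wordProd_append, wordProd_append,
    wordProd_cons]
  congr 1
  rw [← mul_assoc, comm_seg h, mul_assoc]

lemma wordProd_congr_right (X : List ℕ) {Y Y' : List ℕ} (h : wordProd Y = wordProd Y') :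
    wordProd (X ++ Y) = wordProd (X ++ Y') := by
  rw [wordProd_append, wordProd_append, h]

lemma wordProd_three (a b c : ℕ) : wordProd [a, b, c] = sTrans a * sTrans b * sTrans c := by
  rw [wordProd_cons, wordProd_cons, wordProd_singleton, mul_assoc]

lemma mem_split_first {a : ℕ} {l : List ℕ} (h : a ∈ l) :
    ∃ s t, l = s ++ a :: t ∧ a ∉ s := by
  induction l with
  | nil => simp at h
  | cons x l ih =>
    by_cases hx : x = a
    · exact ⟨[], l, by simp [hx], by simp⟩
    · have h' : a ∈ l := by
        rcases List.mem_cons.mp h with h | h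
        · exact absurd h.symm hx
        · exact h
      obtain ⟨s, t, hst, hs⟩ := ih h'
      refine ⟨x :: s, t, by simp [hst], ?_⟩
      simp only [List.mem_cons, not_or]
      exact ⟨fun hc => hx hc.symm, hs⟩

lemma le_foldr_max {a : ℕ} {l : List ℕ} (h : a ∈ l) : a ≤ l.foldr max 0 := by
  induction l with
  | nil => simp at h
  | cons x l ih =>
    rcases List.mem_cons.mp h with rfl | h
    · simp
    · exact le_trans (ih h) (by simp)

lemma down_aux {w : Equiv.Perm ℕ} {L : List ℕ} (hred : IsReducedWordFor w L) :
    ∀ n i A B C, i * (L.length + 1) + B.length ≤ n → L = A ++ i :: (B ++ i :: C) →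
      (i+1) ∉ B → Has321 w := by
  intro n
  induction n using Nat.strong_induction_on with
  | _ n ih =>
    intro i A B C hm hL hB
    have hlet := hred.1
    have hi1 : 1 ≤ i := hlet i (by rw [hL]; simp)
    have hlen : L.length = A.length + B.length + C.length + 2 := by
      rw [hL]; simp; omega
    by_cases hiB : i ∈ B
    · obtain ⟨B1, B2, hBs⟩ := List.append_of_mem hiB
      have hlB : B.length = B1.length + B2.length + 1 := by rw [hBs]; simp; omega
      refine ih (i * (L.length + 1) + B1.length) (by omega) i A B1 (B2 ++ i :: C)
        le_rfl ?_ ?_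
      · rw [hL, hBs]; simp
      · intro hc; exact hB (by rw [hBs]; simp [hc])
    · by_cases hm1 : (i - 1) ∈ B
      · obtain ⟨B1, B2, hBs, hB1⟩ := mem_split_first hm1
        by_cases hm2 : (i - 1) ∈ B2
        · obtain ⟨B21, B22, hB2s⟩ := List.append_of_mem hm2
          have hlB : B.length = B1.length + B21.length + B22.length + 2 := by
            rw [hBs, hB2s]; simp; omega
          have emul : i * (L.length + 1) = (i-1) * (L.length+1) + (L.length + 1) := by
            conv_lhs => rw [← Nat.succ_pred_eq_of_pos (show 0 < i by omega)]
            rw [Nat.succ_mul, Nat.pred_eq_sub_one]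
          refine ih ((i-1) * (L.length + 1) + B21.length) (by omega) (i-1)
            (A ++ i :: B1) B21 (B22 ++ i :: C) le_rfl ?_ ?_
          · rw [hL, hBs, hB2s]; simp
          · have : i - 1 + 1 = i := by omega
            rw [this]
            intro hc
            exact hiB (by rw [hBs, hB2s]; simp [hc])
        · -- braid case, i-1 occurs exactly once in B
          obtain ⟨j, rfl⟩ : ∃ j, i = j + 1 := ⟨i - 1, by omega⟩
          simp only [Nat.add_sub_cancel] at hBs hB1 hm2 hm1
          have hj1 : 1 ≤ j := hlet j (by rw [hL, hBs]; simp)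
          have hcomm1 : ∀ b ∈ B1, b + 2 ≤ j + 1 ∨ (j+1) + 2 ≤ b := by
            intro b hb
            have h1 : 1 ≤ b := hlet b (by rw [hL, hBs]; simp [hb])
            have h2 : b ≠ j := fun hc => hB1 (hc ▸ hb)
            have h3 : b ≠ j + 1 := fun hc => hiB (by rw [hBs]; simp [hc ▸ hb])
            have h4 : b ≠ j + 2 := fun hc => hB (by rw [hBs]; simp [hc ▸ hb])
            omega
          have hcomm2 : ∀ b ∈ B2, b + 2 ≤ j + 1 ∨ (j+1) + 2 ≤ b := by
            intro b hb
            have h1 : 1 ≤ b := hlet b (by rw [hL, hBs]; simp [hb])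
            have h2 : b ≠ j := fun hc => hm2 (hc ▸ hb)
            have h3 : b ≠ j + 1 := fun hc => hiB (by rw [hBs]; simp [hc ▸ hb])
            have h4 : b ≠ j + 2 := fun hc => hB (by rw [hBs]; simp [hc ▸ hb])
            omega
          have hprod : wordProd ((A ++ B1) ++ [j, j+1, j] ++ (B2 ++ C)) = w := by
            have s1 : wordProd L =
                wordProd (A ++ (j+1) :: (B1 ++ (j :: (B2 ++ (j+1) :: C)))) := by
              rw [hL, hBs]; simp
            have s2 : wordProd (A ++ (j+1) :: (B1 ++ (j :: (B2 ++ (j+1) :: C)))) =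
                wordProd (A ++ (B1 ++ (j+1) :: (j :: (B2 ++ (j+1) :: C)))) :=
              key_prod hcomm1
            have s3 : wordProd (A ++ (B1 ++ (j+1) :: (j :: (B2 ++ (j+1) :: C)))) =
                wordProd ((A ++ B1 ++ [j+1, j]) ++ (B2 ++ (j+1) :: C)) := by
              congr 1; simp
            have s4 : wordProd ((A ++ B1 ++ [j+1, j]) ++ (B2 ++ (j+1) :: C)) =
                wordProd ((A ++ B1 ++ [j+1, j]) ++ ((j+1) :: (B2 ++ C))) := by
              apply wordProd_congr_right
              exact (key_prod (A := []) hcomm2).symm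
            have s5 : wordProd ((A ++ B1 ++ [j+1, j]) ++ ((j+1) :: (B2 ++ C))) =
                wordProd ((A ++ B1) ++ ([j+1, j, j+1] ++ (B2 ++ C))) := by
              congr 1; simp
            have braid3 : wordProd [j+1, j, j+1] = wordProd [j, j+1, j] := by
              rw [wordProd_three, wordProd_three, sTrans_braid]
            have s6 : wordProd ((A ++ B1) ++ ([j+1, j, j+1] ++ (B2 ++ C))) =
                wordProd ((A ++ B1) ++ ([j, j+1, j] ++ (B2 ++ C))) := by
              apply wordProd_congr_right
              rw [wordProd_append [j+1,j,j+1], wordProd_append [j,j+1,j], braid3]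
            rw [← hred.2.1, s1, s2, s3, s4, s5, s6, List.append_assoc]
          have hred' : IsReducedWordFor w ((A ++ B1) ++ [j, j+1, j] ++ (B2 ++ C)) := by
            refine ⟨?_, hprod, ?_⟩
            · intro b hb
              simp only [List.mem_append, List.mem_cons] at hb
              rcases hb with (hb | hb) | hb
              · rcases hb with hb | hb
                · exact hlet b (by rw [hL]; simp [hb])
                · exact hlet b (by rw [hL, hBs]; simp [hb])
              · simp at hb; rcases hb with rfl | rfl | rfl <;> omega
              · rcases hb with hb | hb
                · exact hlet b (by rw [hL, hBs]; simp [hb])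
                · exact hlet b (by rw [hL]; simp [hb])
            · intro M hM1 hM2
              have hlB : B.length = B1.length + B2.length + 1 := by rw [hBs]; simp; omega
              have := hred.2.2 M hM1 hM2
              simp only [List.length_append, List.length_cons, List.length_nil]
              simp only [hlen] at this ⊢
              omega
          exact braid_lemma hj1 hred'
      · -- no i-1, no i, no i+1 in B : contradiction with minimality
        exfalso
        have hcomm : ∀ b ∈ B, b + 2 ≤ i ∨ i + 2 ≤ b := by
          intro b hb
          have h1 : 1 ≤ b := hlet b (by rw [hL]; simp [hb])
          have h2 : b ≠ i - 1 := fun hc => hm1 (hc ▸ hb)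
          have h3 : b ≠ i := fun hc => hiB (hc ▸ hb)
          have h4 : b ≠ i + 1 := fun hc => hB (hc ▸ hb)
          omega
        have hw : wordProd (A ++ (B ++ C)) = w := by
          rw [← hred.2.1, hL]
          have s1 : wordProd (A ++ i :: (B ++ i :: C)) =
              wordProd (A ++ (B ++ i :: i :: C)) := key_prod hcomm
          rw [s1]
          apply wordProd_congr_right
          apply wordProd_congr_right
          rw [wordProd_cons, wordProd_cons, ← mul_assoc, sTrans_mul_self, one_mul]
        have hlen2 := hred.2.2 (A ++ (B ++ C)) (fun b hb => by
          apply hlet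
          rw [hL]
          simp only [List.mem_append, List.mem_cons] at hb ⊢
          tauto) hw
        simp only [List.length_append] at hlen2
        omega

lemma up_aux {w : Equiv.Perm ℕ} {L : List ℕ} (hred : IsReducedWordFor w L) :
    ∀ n i A B C, (L.foldr max 0 + 1 - i) * (L.length + 1) + B.length ≤ n →
      L = A ++ i :: (B ++ i :: C) → (i - 1) ∉ B → Has321 w := by
  intro n
  induction n using Nat.strong_induction_on with
  | _ n ih =>
    intro i A B C hm hL hB
    have hlet := hred.1
    have hi1 : 1 ≤ i := hlet i (by rw [hL]; simp)
    have hiM : i ≤ L.foldr max 0 := le_foldr_max (by rw [hL]; simp)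
    have hlen : L.length = A.length + B.length + C.length + 2 := by
      rw [hL]; simp; omega
    by_cases hiB : i ∈ B
    · obtain ⟨B1, B2, hBs⟩ := List.append_of_mem hiB
      have hlB : B.length = B1.length + B2.length + 1 := by rw [hBs]; simp; omega
      refine ih ((L.foldr max 0 + 1 - i) * (L.length + 1) + B1.length) (by omega) i A B1
        (B2 ++ i :: C) le_rfl ?_ ?_
      · rw [hL, hBs]; simp
      · intro hc; exact hB (by rw [hBs]; simp [hc])
    · by_cases hm1 : (i + 1) ∈ B
      · obtain ⟨B1, B2, hBs, hB1⟩ := mem_split_first hm1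
        by_cases hm2 : (i + 1) ∈ B2
        · obtain ⟨B21, B22, hB2s⟩ := List.append_of_mem hm2
          have hlB : B.length = B1.length + B21.length + B22.length + 2 := by
            rw [hBs, hB2s]; simp; omega
          have hi1M : i + 1 ≤ L.foldr max 0 :=
            le_foldr_max (a := i+1) (l := L) (by rw [hL, hBs]; simp)
          have emul : (L.foldr max 0 + 1 - i) * (L.length + 1) =
              (L.foldr max 0 + 1 - (i+1)) * (L.length + 1) + (L.length + 1) := by
            have e : L.foldr max 0 + 1 - i = (L.foldr max 0 + 1 - (i+1)) + 1 := by omega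
            rw [e, Nat.succ_mul]
          refine ih ((L.foldr max 0 + 1 - (i+1)) * (L.length + 1) + B21.length)
            (by omega) (i+1) (A ++ i :: B1) B21 (B22 ++ i :: C) le_rfl ?_ ?_
          · rw [hL, hBs, hB2s]; simp
          · have e : i + 1 - 1 = i := by omega
            rw [e]
            intro hc
            exact hiB (by rw [hBs, hB2s]; simp [hc])
        · -- braid case, i+1 occurs exactly once in B
          have hcomm1 : ∀ b ∈ B1, b + 2 ≤ i ∨ i + 2 ≤ b := by
            intro b hb
            have h1 : 1 ≤ b := hlet b (by rw [hL, hBs]; simp [hb])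
            have h2 : b ≠ i + 1 := fun hc => hB1 (hc ▸ hb)
            have h3 : b ≠ i := fun hc => hiB (by rw [hBs]; simp [hc ▸ hb])
            have h4 : b ≠ i - 1 := fun hc => hB (by rw [hBs]; simp [hc ▸ hb])
            omega
          have hcomm2 : ∀ b ∈ B2, b + 2 ≤ i ∨ i + 2 ≤ b := by
            intro b hb
            have h1 : 1 ≤ b := hlet b (by rw [hL, hBs]; simp [hb])
            have h2 : b ≠ i + 1 := fun hc => hm2 (hc ▸ hb)
            have h3 : b ≠ i := fun hc => hiB (by rw [hBs]; simp [hc ▸ hb])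
            have h4 : b ≠ i - 1 := fun hc => hB (by rw [hBs]; simp [hc ▸ hb])
            omega
          have hprod : wordProd ((A ++ B1) ++ [i, i+1, i] ++ (B2 ++ C)) = w := by
            have s1 : wordProd L =
                wordProd (A ++ i :: (B1 ++ ((i+1) :: (B2 ++ i :: C)))) := by
              rw [hL, hBs]; simp
            have s2 : wordProd (A ++ i :: (B1 ++ ((i+1) :: (B2 ++ i :: C)))) =
                wordProd (A ++ (B1 ++ i :: ((i+1) :: (B2 ++ i :: C)))) :=
              key_prod hcomm1
            have s3 : wordProd (A ++ (B1 ++ i :: ((i+1) :: (B2 ++ i :: C)))) =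
                wordProd ((A ++ B1 ++ [i, i+1]) ++ (B2 ++ i :: C)) := by
              congr 1; simp
            have s4 : wordProd ((A ++ B1 ++ [i, i+1]) ++ (B2 ++ i :: C)) =
                wordProd ((A ++ B1 ++ [i, i+1]) ++ (i :: (B2 ++ C))) := by
              apply wordProd_congr_right
              exact (key_prod (A := []) hcomm2).symm
            have s5 : wordProd ((A ++ B1 ++ [i, i+1]) ++ (i :: (B2 ++ C))) =
                wordProd ((A ++ B1) ++ ([i, i+1, i] ++ (B2 ++ C))) := by
              congr 1; simp
            rw [← hred.2.1, s1, s2, s3, s4, s5, List.append_assoc]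
          have hred' : IsReducedWordFor w ((A ++ B1) ++ [i, i+1, i] ++ (B2 ++ C)) := by
            refine ⟨?_, hprod, ?_⟩
            · intro b hb
              simp only [List.mem_append, List.mem_cons] at hb
              rcases hb with (hb | hb) | hb
              · rcases hb with hb | hb
                · exact hlet b (by rw [hL]; simp [hb])
                · exact hlet b (by rw [hL, hBs]; simp [hb])
              · simp at hb; rcases hb with rfl | rfl | rfl <;> omega
              · rcases hb with hb | hb
                · exact hlet b (by rw [hL, hBs]; simp [hb])
                · exact hlet b (by rw [hL]; simp [hb])
            · intro M hM1 hM2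
              have hlB : B.length = B1.length + B2.length + 1 := by rw [hBs]; simp; omega
              have := hred.2.2 M hM1 hM2
              simp only [List.length_append, List.length_cons, List.length_nil]
              simp only [hlen] at this ⊢
              omega
          exact braid_lemma hi1 hred'
      · -- no i-1, no i, no i+1 in B : contradiction with minimality
        exfalso
        have hcomm : ∀ b ∈ B, b + 2 ≤ i ∨ i + 2 ≤ b := by
          intro b hb
          have h1 : 1 ≤ b := hlet b (by rw [hL]; simp [hb])
          have h2 : b ≠ i - 1 := fun hc => hB (hc ▸ hb)
          have h3 : b ≠ i := fun hc => hiB (hc ▸ hb)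
          have h4 : b ≠ i + 1 := fun hc => hm1 (hc ▸ hb)
          omega
        have hw : wordProd (A ++ (B ++ C)) = w := by
          rw [← hred.2.1, hL]
          have s1 : wordProd (A ++ i :: (B ++ i :: C)) =
              wordProd (A ++ (B ++ i :: i :: C)) := key_prod hcomm
          rw [s1]
          apply wordProd_congr_right
          apply wordProd_congr_right
          rw [wordProd_cons, wordProd_cons, ← mul_assoc, sTrans_mul_self, one_mul]
        have hlen2 := hred.2.2 (A ++ (B ++ C)) (fun b hb => by
          apply hlet
          rw [hL]
          simp only [List.mem_append, List.mem_cons] at hb ⊢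
          tauto) hw
        simp only [List.length_append] at hlen2
        omega

lemma pair_decomp {L : List ℕ} {p q : ℕ} (hpq : p < q) (hq : q < L.length)
    (he : L.getD p 0 = L.getD q 0) :
    ∃ A B C, L = A ++ L.getD p 0 :: (B ++ L.getD p 0 :: C) ∧ A.length = p ∧
      p + 1 + B.length = q ∧
      ∀ b ∈ B, ∃ m, p < m ∧ m < q ∧ L.getD m 0 = b := by
  have hp : p < L.length := by omega
  have hq1 : q - (p+1) < (L.drop (p+1)).length := by
    rw [List.length_drop]; omega
  refine ⟨L.take p, (L.drop (p+1)).take (q - (p+1)), (L.drop (p+1)).drop (q - p), ?_, ?_, ?_, ?_⟩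
  · conv_lhs => rw [← List.take_append_drop p L]
    congr 1
    rw [List.drop_eq_getElem_cons hp]
    congr 1
    · exact (List.getD_eq_getElem L 0 hp).symm
    · conv_lhs => rw [← List.take_append_drop (q - (p+1)) (L.drop (p+1))]
      congr 1
      rw [List.drop_eq_getElem_cons hq1]
      have h1 : (L.drop (p+1))[q - (p+1)] = L[q] := by
        rw [List.getElem_drop]
        congr 1
        omega
      have h2 : (L.drop (p+1)).drop (q - (p+1) + 1) = (L.drop (p+1)).drop (q - p) := by
        congr 1
        omega
      rw [h1, h2, he]
      congr 1
      exact (List.getD_eq_getElem L 0 hq).symm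
  · rw [List.length_take]; omega
  · rw [List.length_take, List.length_drop]; omega
  · intro b hb
    obtain ⟨k, hk, hbk⟩ := List.mem_iff_getElem.mp hb
    have hkl : k < q - (p+1) := by
      have := hk
      rw [List.length_take, List.length_drop] at this
      omega
    refine ⟨p + 1 + k, by omega, by omega, ?_⟩
    have h1 : ((L.drop (p+1)).take (q - (p+1)))[k] = L[p+1+k]'(by omega) := by
      rw [List.getElem_take, List.getElem_drop]
    rw [List.getD_eq_getElem L 0 (by omega : p+1+k < L.length), ← h1, hbk]

lemma part1_forward {w : Equiv.Perm ℕ} (h321 : ¬ Has321 w) {L : List ℕ}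
    (hred : IsReducedWordFor w L) {p q : ℕ} (hpq : p < q) (hq : q < L.length)
    (he : L.getD p 0 = L.getD q 0) :
    (∃ m, p < m ∧ m < q ∧ L.getD m 0 = L.getD p 0 - 1) ∧
    (∃ m, p < m ∧ m < q ∧ L.getD m 0 = L.getD p 0 + 1) := by
  obtain ⟨A, B, C, hL, hA, hB, hmem⟩ := pair_decomp hpq hq he
  constructor
  · by_contra hno
    push_neg at hno
    apply h321
    refine up_aux hred _ (L.getD p 0) A B C le_rfl hL ?_
    intro hc
    obtain ⟨m, hm1, hm2, hm3⟩ := hmem _ hc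
    exact absurd hm3 (hno m hm1 hm2)
  · by_contra hno
    push_neg at hno
    apply h321
    refine down_aux hred _ (L.getD p 0) A B C le_rfl hL ?_
    intro hc
    obtain ⟨m, hm1, hm2, hm3⟩ := hmem _ hc
    exact absurd hm3 (hno m hm1 hm2)

lemma descent_between {w : Equiv.Perm ℕ} {x y : ℕ} (hxy : x < y) (hw : w y < w x) :
    ∃ d, x ≤ d ∧ d < y ∧ w (d+1) < w d := by
  by_contra hno
  push_neg at hno
  have key : ∀ t, x + t ≤ y → w x ≤ w (x + t) := by
    intro t
    induction t with
    | zero => intro _; simp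
    | succ t iht =>
      intro ht
      have h1 := iht (by omega)
      have h2 := hno (x + t) (by omega) (by omega)
      have : x + (t + 1) = (x + t) + 1 := by omega
      rw [this]
      omega
  have := key (y - x) (by omega)
  rw [Nat.add_sub_cancel' (by omega : x ≤ y)] at this
  omega

lemma pattern_survives {w : Equiv.Perm ℕ} {d i j k : ℕ} (hd : 1 ≤ d)
    (hi : 1 ≤ i) (hij : i < j) (hjk : j < k) (hv1 : w k < w j) (hv2 : w j < w i)
    (hne1 : ¬(i = d ∧ j = d + 1)) (hne2 : ¬(j = d ∧ k = d + 1)) :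
    Has321 (w * sTrans d) := by
  have hne3 : ¬(i = d ∧ k = d + 1) := by rintro ⟨rfl, rfl⟩; omega
  refine ⟨sTrans d i, sTrans d j, sTrans d k, ?_, sTrans_lt hij hne1,
    sTrans_lt hjk hne2, ?_, ?_⟩
  · rw [sTrans_apply]; split_ifs <;> omega
  · simp only [mul_sTrans_apply, sTrans_sTrans]; exact hv1
  · simp only [mul_sTrans_apply, sTrans_sTrans]; exact hv2

lemma B321 {w : Equiv.Perm ℕ} (hf : FSupp w) (h3 : Has321 w) :
    ∃ X Y i, 1 ≤ i ∧ IsReducedWordFor w (X ++ [i, i+1, i] ++ Y) := by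
  generalize hk : invLen w = n
  induction n using Nat.strong_induction_on generalizing w with
  | _ n ih =>
    by_cases hD : ∃ d, 1 ≤ d ∧ w (d+1) < w d ∧ Has321 (w * sTrans d)
    · obtain ⟨d, hd1, hd2, hd3⟩ := hD
      have hfin := invSet_finite hf
      have hdesc := invLen_mul_sTrans_desc hfin hd2
      obtain ⟨X, Y, i, hi, hred⟩ := ih (invLen (w * sTrans d)) (by omega)
        (fsupp_mul_sTrans hf hd1) hd3 rfl
      obtain ⟨hr1, hr2, hr3⟩ := reduced_iff_len.mp hred
      refine ⟨X, Y ++ [d], i, hi, reduced_iff_len.mpr ⟨?_, ?_, ?_⟩⟩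
      · intro b hb
        simp only [List.mem_append, List.mem_cons, List.not_mem_nil, or_false] at hb
        rcases hb with (hb | hb) | (hb | rfl)
        · exact hr1 b (by simp [hb])
        · apply hr1 b
          simp only [List.mem_append, List.mem_cons]
          tauto
        · exact hr1 b (by simp [hb])
        · omega
      · have : X ++ [i, i+1, i] ++ (Y ++ [d]) = (X ++ [i, i+1, i] ++ Y) ++ [d] := by
          simp
        rw [this, wordProd_append, hr2, wordProd_singleton, mul_assoc,
          sTrans_mul_self, mul_one]
      · simp only [List.length_append, List.length_cons, List.length_nil] at hr3 ⊢
        omega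
    · push_neg at hD
      obtain ⟨i, j, k, hi, hij, hjk, hv1, hv2⟩ := h3
      have surv : ∀ d, 1 ≤ d → w (d+1) < w d → (i = d ∧ j = d+1) ∨ (j = d ∧ k = d+1) := by
        intro d hd hdd
        by_contra hcon
        push_neg at hcon
        exact hD d hd hdd (pattern_survives hd hi hij hjk hv1 hv2
          (by rintro ⟨h1, h2⟩; exact (hcon.1 h1 h2).elim)
          (by rintro ⟨h1, h2⟩; exact (hcon.2 h1 h2).elim))
      have hkj : k = j + 1 := by
        by_contra hkj
        obtain ⟨d, hd1, hd2, hd3⟩ := descent_between hjk hv1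
        rcases surv d (by omega) hd3 with ⟨h1, h2⟩ | ⟨h1, h2⟩ <;> omega
      have hji : j = i + 1 := by
        by_contra hji
        obtain ⟨d, hd1, hd2, hd3⟩ := descent_between hij hv2
        rcases surv d (by omega) hd3 with ⟨h1, h2⟩ | ⟨h1, h2⟩ <;> omega
      subst hkj; subst hji
      -- consecutive descending triple at positions i, i+1, i+2
      have hf1 := invSet_finite hf
      have e1 : invLen (w * sTrans i) + 1 = invLen w := invLen_mul_sTrans_desc hf1 hv2
      have hfs1 : FSupp (w * sTrans i) := fsupp_mul_sTrans hf hi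
      have hval1a : (w * sTrans i) (i+1) = w i := by
        rw [mul_sTrans_apply, sTrans_a1]
      have hval1b : (w * sTrans i) (i+1+1) = w (i+1+1) := by
        rw [mul_sTrans_apply]
        congr 1
        rw [sTrans_apply]; split_ifs <;> omega
      have hd2 : (w * sTrans i) (i+1+1) < (w * sTrans i) (i+1) := by
        rw [hval1a, hval1b]; omega
      have e2 : invLen (w * sTrans i * sTrans (i+1)) + 1 = invLen (w * sTrans i) :=
        invLen_mul_sTrans_desc (invSet_finite hfs1) hd2
      have hfs2 : FSupp (w * sTrans i * sTrans (i+1)) := fsupp_mul_sTrans hfs1 (by omega)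
      have hval2a : (w * sTrans i * sTrans (i+1)) i = w (i+1) := by
        rw [mul_sTrans_apply]
        have : sTrans (i+1) i = i := by rw [sTrans_apply]; split_ifs <;> omega
        rw [this, mul_sTrans_apply, sTrans_a]
      have hval2b : (w * sTrans i * sTrans (i+1)) (i+1) = w (i+1+1) := by
        rw [mul_sTrans_apply, sTrans_a, mul_sTrans_apply]
        congr 1
        rw [sTrans_apply]; split_ifs <;> omega
      have hd3 : (w * sTrans i * sTrans (i+1)) (i+1) < (w * sTrans i * sTrans (i+1)) i := by
        rw [hval2a, hval2b]; omega
      have e3 : invLen (w * sTrans i * sTrans (i+1) * sTrans i) + 1 =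
          invLen (w * sTrans i * sTrans (i+1)) :=
        invLen_mul_sTrans_desc (invSet_finite hfs2) hd3
      have hfs3 : FSupp (w * sTrans i * sTrans (i+1) * sTrans i) := fsupp_mul_sTrans hfs2 hi
      obtain ⟨X, hX1, hX2, hX3⟩ := exists_min_word hfs3
      refine ⟨X, [], i, hi, reduced_iff_len.mpr ⟨?_, ?_, ?_⟩⟩
      · intro b hb
        simp only [List.mem_append, List.mem_cons] at hb
        rcases hb with (hb | hb) | hb
        · exact hX1 b hb
        · rcases hb with rfl | hb
          · exact hi
          · rcases hb with rfl | hb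
            · omega
            · rcases hb with rfl | hb
              · exact hi
              · simp at hb
        · simp at hb
      · rw [List.append_nil, wordProd_append, hX2, wordProd_three]
        simp only [mul_assoc]
        rw [← mul_assoc (sTrans i) (sTrans i), sTrans_mul_self, one_mul,
          ← mul_assoc (sTrans (i+1)) (sTrans (i+1)), sTrans_mul_self, one_mul,
          sTrans_mul_self, mul_one]
      · simp only [List.length_append, List.length_cons, List.length_nil]
        omega

lemma getD_concat (A F B : List ℕ) (k : ℕ) (hk : k < F.length) :
    (A ++ F ++ B).getD (A.length + k) 0 = F.getD k 0 := by
  rw [List.append_assoc]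
  rw [List.getD_append_right _ _ _ _ (by omega)]
  have h2 : A.length + k - A.length = k := by omega
  rw [h2]
  exact List.getD_append _ _ _ _ (by omega)

lemma part1_backward {w : Equiv.Perm ℕ} (hf : FSupp w) (h3 : Has321 w) :
    ¬ (∀ L, IsReducedWordFor w L → ∀ p q, p < q → q < L.length →
        L.getD p 0 = L.getD q 0 →
        (∃ m, p < m ∧ m < q ∧ L.getD m 0 = L.getD p 0 - 1) ∧
        (∃ m, p < m ∧ m < q ∧ L.getD m 0 = L.getD p 0 + 1)) := by
  obtain ⟨X, Y, i, hi, hred⟩ := B321 hf h3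
  intro hall
  have hlen : (X ++ [i, i+1, i] ++ Y).length = X.length + 3 + Y.length := by
    simp only [List.length_append, List.length_cons, List.length_nil]
  have g0 : (X ++ [i, i+1, i] ++ Y).getD X.length 0 = i := by
    have := getD_concat X [i, i+1, i] Y 0 (by simp)
    simpa using this
  have g1 : (X ++ [i, i+1, i] ++ Y).getD (X.length + 1) 0 = i + 1 :=
    getD_concat X [i, i+1, i] Y 1 (by simp)
  have g2 : (X ++ [i, i+1, i] ++ Y).getD (X.length + 2) 0 = i :=
    getD_concat X [i, i+1, i] Y 2 (by simp)
  obtain ⟨⟨m, hm1, hm2, hm3⟩, _⟩ := hall _ hred X.length (X.length + 2) (by omega)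
    (by omega) (by rw [g0, g2])
  have hm : m = X.length + 1 := by omega
  subst hm
  rw [g0, g1] at hm3
  omega


lemma no_adj {w : Equiv.Perm ℕ} {L : List ℕ} (hred : IsReducedWordFor w L)
    {A B : List ℕ} {x : ℕ} (hL : L = A ++ [x, x] ++ B) : False := by
  have hw : wordProd (A ++ B) = w := by
    rw [← hred.2.1, hL, List.append_assoc, wordProd_append, wordProd_append]
    congr 1
    show wordProd B = wordProd ([x, x] ++ B)
    rw [wordProd_append, wordProd_cons, wordProd_singleton, sTrans_mul_self, one_mul]
  have hlen := hred.2.2 (A ++ B) (fun b hb => by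
    apply hred.1
    rw [hL]
    simp only [List.mem_append, List.mem_cons] at hb ⊢
    tauto) hw
  rw [hL] at hlen
  simp only [List.length_append, List.length_cons, List.length_nil] at hlen
  omega

lemma no_factor_aba {w : Equiv.Perm ℕ} (h321 : ¬ Has321 w) {L : List ℕ}
    (hred : IsReducedWordFor w L) {A B : List ℕ} {x : ℕ}
    (hL : L = A ++ [x, x+1, x] ++ B) : False := by
  subst hL
  have hlen : (A ++ [x, x+1, x] ++ B).length = A.length + 3 + B.length := by
    simp only [List.length_append, List.length_cons, List.length_nil]
  have g0 : (A ++ [x, x+1, x] ++ B).getD A.length 0 = x := by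
    have := getD_concat A [x, x+1, x] B 0 (by simp)
    simpa using this
  have g1 : (A ++ [x, x+1, x] ++ B).getD (A.length + 1) 0 = x + 1 :=
    getD_concat A [x, x+1, x] B 1 (by simp)
  have g2 : (A ++ [x, x+1, x] ++ B).getD (A.length + 2) 0 = x :=
    getD_concat A [x, x+1, x] B 2 (by simp)
  obtain ⟨⟨m, hm1, hm2, hm3⟩, _⟩ := part1_forward h321 hred
    (show A.length < A.length + 2 by omega) (by omega) (by rw [g0, g2])
  have hm : m = A.length + 1 := by omega
  subst hm
  rw [g0, g1] at hm3
  omega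

lemma no_factor_bab {w : Equiv.Perm ℕ} (h321 : ¬ Has321 w) {L : List ℕ}
    (hred : IsReducedWordFor w L) {A B : List ℕ} {x : ℕ}
    (hL : L = A ++ [x+1, x, x+1] ++ B) : False := by
  subst hL
  have hlen : (A ++ [x+1, x, x+1] ++ B).length = A.length + 3 + B.length := by
    simp only [List.length_append, List.length_cons, List.length_nil]
  have g0 : (A ++ [x+1, x, x+1] ++ B).getD A.length 0 = x + 1 := by
    have := getD_concat A [x+1, x, x+1] B 0 (by simp)
    simpa using this
  have g1 : (A ++ [x+1, x, x+1] ++ B).getD (A.length + 1) 0 = x :=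
    getD_concat A [x+1, x, x+1] B 1 (by simp)
  have g2 : (A ++ [x+1, x, x+1] ++ B).getD (A.length + 2) 0 = x + 1 :=
    getD_concat A [x+1, x, x+1] B 2 (by simp)
  obtain ⟨_, ⟨m, hm1, hm2, hm3⟩⟩ := part1_forward h321 hred
    (show A.length < A.length + 2 by omega) (by omega) (by rw [g0, g2])
  have hm : m = A.length + 1 := by omega
  subst hm
  rw [g0, g1] at hm3
  omega

lemma prod_ikj {i j k : ℕ} (h : i + 2 ≤ k) : wordProd [i, k, j] = wordProd [k, i, j] := by
  rw [wordProd_three, wordProd_three, sTrans_comm (Or.inl h)]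

lemma prod_jik {i j k : ℕ} (h : i + 2 ≤ k) : wordProd [j, i, k] = wordProd [j, k, i] := by
  rw [wordProd_three, wordProd_three, mul_assoc, mul_assoc, sTrans_comm (Or.inl h)]

lemma reduced_congr_mid {w : Equiv.Perm ℕ} {X F F' Y : List ℕ}
    (hred : IsReducedWordFor w (X ++ F ++ Y)) (hp : wordProd F = wordProd F')
    (hl : F.length = F'.length) (hlet : ∀ a ∈ F', 1 ≤ a) :
    IsReducedWordFor w (X ++ F' ++ Y) := by
  obtain ⟨h1, h2, h3⟩ := hred
  refine ⟨?_, ?_, ?_⟩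
  · intro b hb
    simp only [List.mem_append] at hb
    rcases hb with (hb | hb) | hb
    · exact h1 b (by simp [hb])
    · exact hlet b hb
    · exact h1 b (by simp [hb])
  · rw [List.append_assoc, wordProd_append, wordProd_append, ← hp]
    rw [List.append_assoc, wordProd_append, wordProd_append] at h2
    exact h2
  · intro M hM1 hM2
    have := h3 M hM1 hM2
    simp only [List.length_append] at this ⊢
    omega

lemma reduced_letter {w : Equiv.Perm ℕ} {L : List ℕ} (hred : IsReducedWordFor w L)
    {x : ℕ} (hx : x ∈ L) : 1 ≤ x := hred.1 x hx

lemma knuth_step_fwd {w : Equiv.Perm ℕ} (h321 : ¬ Has321 w) {L M : List ℕ}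
    (hs : KnuthStep L M) (hred : IsReducedWordFor w L) :
    IsReducedWordFor w M ∧ CKStep L M := by
  cases hs with
  | k1 a b i j k h1 h2 =>
    rcases eq_or_lt_of_le h1 with rfl | hij
    · by_cases hk : k = i + 1
      · subst hk
        exact (no_factor_aba h321 hred rfl).elim
      · have hk2 : i + 2 ≤ k := by omega
        have hi1 : 1 ≤ i := reduced_letter hred (by simp)
        have hk1 : 1 ≤ k := reduced_letter hred (by simp)
        have hredM : IsReducedWordFor w (a ++ [k, i, i] ++ b) :=
          reduced_congr_mid hred (prod_ikj hk2) rfl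
            (by intro c hc; simp at hc; rcases hc with rfl | rfl <;> omega)
        exact (no_adj hredM (A := a ++ [k]) (B := b) (x := i) (by simp)).elim
    · have hk2 : i + 2 ≤ k := by omega
      refine ⟨reduced_congr_mid hred (prod_ikj hk2) rfl ?_, CKStep.ck1 a b i j k hij h2⟩
      intro c hc
      simp at hc
      rcases hc with rfl | rfl | rfl
      · exact reduced_letter hred (by simp)
      · exact reduced_letter hred (by simp)
      · exact reduced_letter hred (by simp)
  | k2 a b i j k h1 h2 =>
    rcases eq_or_lt_of_le h2 with rfl | hjk
    · by_cases hj : j = i + 1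
      · subst hj
        exact (no_factor_bab h321 hred rfl).elim
      · have hj2 : i + 2 ≤ j := by omega
        have hredM : IsReducedWordFor w (a ++ [j, j, i] ++ b) :=
          reduced_congr_mid hred (prod_jik hj2) rfl
            (by intro c hc
                simp at hc
                rcases hc with rfl | rfl
                · exact reduced_letter hred (by simp)
                · exact reduced_letter hred (by simp))
        exact (no_adj hredM (A := a) (B := i :: b) (x := j) (by simp)).elim
    · have hk2 : i + 2 ≤ k := by omega
      refine ⟨reduced_congr_mid hred (prod_jik hk2) rfl ?_, CKStep.ck2 a b i j k h1 hjk⟩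
      intro c hc
      simp at hc
      rcases hc with rfl | rfl | rfl
      · exact reduced_letter hred (by simp)
      · exact reduced_letter hred (by simp)
      · exact reduced_letter hred (by simp)

lemma knuth_step_bwd {w : Equiv.Perm ℕ} (h321 : ¬ Has321 w) {L M : List ℕ}
    (hs : KnuthStep M L) (hred : IsReducedWordFor w L) :
    IsReducedWordFor w M ∧ CKStep M L := by
  cases hs with
  | k1 a b i j k h1 h2 =>
    rcases eq_or_lt_of_le h1 with rfl | hij
    · exact (no_adj hred (A := a ++ [k]) (B := b) (x := i) (by simp)).elim
    · have hk2 : i + 2 ≤ k := by omega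
      refine ⟨reduced_congr_mid hred (prod_ikj hk2).symm rfl ?_,
        CKStep.ck1 a b i j k hij h2⟩
      intro c hc
      simp at hc
      rcases hc with rfl | rfl | rfl
      · exact reduced_letter hred (by simp)
      · exact reduced_letter hred (by simp)
      · exact reduced_letter hred (by simp)
  | k2 a b i j k h1 h2 =>
    rcases eq_or_lt_of_le h2 with rfl | hjk
    · exact (no_adj hred (A := a) (B := i :: b) (x := j) (by simp)).elim
    · have hk2 : i + 2 ≤ k := by omega
      refine ⟨reduced_congr_mid hred (prod_jik hk2).symm rfl ?_,
        CKStep.ck2 a b i j k h1 hjk⟩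
      intro c hc
      simp at hc
      rcases hc with rfl | rfl | rfl
      · exact reduced_letter hred (by simp)
      · exact reduced_letter hred (by simp)
      · exact reduced_letter hred (by simp)

lemma ck_step_fwd {w : Equiv.Perm ℕ} (h321 : ¬ Has321 w) {L M : List ℕ}
    (hs : CKStep L M) (hred : IsReducedWordFor w L) :
    IsReducedWordFor w M ∧ KnuthStep L M := by
  cases hs with
  | ck1 a b i j k h1 h2 =>
    have hk2 : i + 2 ≤ k := by omega
    refine ⟨reduced_congr_mid hred (prod_ikj hk2) rfl ?_,
      KnuthStep.k1 a b i j k (le_of_lt h1) h2⟩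
    intro c hc
    simp at hc
    rcases hc with rfl | rfl | rfl
    · exact reduced_letter hred (by simp)
    · exact reduced_letter hred (by simp)
    · exact reduced_letter hred (by simp)
  | ck2 a b i j k h1 h2 =>
    have hk2 : i + 2 ≤ k := by omega
    refine ⟨reduced_congr_mid hred (prod_jik hk2) rfl ?_,
      KnuthStep.k2 a b i j k h1 (le_of_lt h2)⟩
    intro c hc
    simp at hc
    rcases hc with rfl | rfl | rfl
    · exact reduced_letter hred (by simp)
    · exact reduced_letter hred (by simp)
    · exact reduced_letter hred (by simp)
  | ck3 a b i =>
    exact (no_factor_aba h321 hred rfl).elim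

lemma ck_step_bwd {w : Equiv.Perm ℕ} (h321 : ¬ Has321 w) {L M : List ℕ}
    (hs : CKStep M L) (hred : IsReducedWordFor w L) :
    IsReducedWordFor w M ∧ KnuthStep M L := by
  cases hs with
  | ck1 a b i j k h1 h2 =>
    have hk2 : i + 2 ≤ k := by omega
    refine ⟨reduced_congr_mid hred (prod_ikj hk2).symm rfl ?_,
      KnuthStep.k1 a b i j k (le_of_lt h1) h2⟩
    intro c hc
    simp at hc
    rcases hc with rfl | rfl | rfl
    · exact reduced_letter hred (by simp)
    · exact reduced_letter hred (by simp)
    · exact reduced_letter hred (by simp)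
  | ck2 a b i j k h1 h2 =>
    have hk2 : i + 2 ≤ k := by omega
    refine ⟨reduced_congr_mid hred (prod_jik hk2).symm rfl ?_,
      KnuthStep.k2 a b i j k h1 (le_of_lt h2)⟩
    intro c hc
    simp at hc
    rcases hc with rfl | rfl | rfl
    · exact reduced_letter hred (by simp)
    · exact reduced_letter hred (by simp)
    · exact reduced_letter hred (by simp)
  | ck3 a b i =>
    exact (no_factor_bab h321 hred rfl).elim

lemma knuth_to_ck {w : Equiv.Perm ℕ} (h321 : ¬ Has321 w) {L M : List ℕ}
    (h : KnuthEquiv L M) :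
    (IsReducedWordFor w L → IsReducedWordFor w M ∧ CKEquiv L M) ∧
    (IsReducedWordFor w M → IsReducedWordFor w L ∧ CKEquiv L M) := by
  induction h with
  | rel x y hxy =>
    exact ⟨fun hx => ⟨(knuth_step_fwd h321 hxy hx).1,
        Relation.EqvGen.rel _ _ (knuth_step_fwd h321 hxy hx).2⟩,
      fun hy => ⟨(knuth_step_bwd h321 hxy hy).1,
        Relation.EqvGen.rel _ _ (knuth_step_bwd h321 hxy hy).2⟩⟩
  | refl x => exact ⟨fun h => ⟨h, Relation.EqvGen.refl x⟩,
      fun h => ⟨h, Relation.EqvGen.refl x⟩⟩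
  | symm x y _ ihxy =>
    exact ⟨fun hy => ⟨(ihxy.2 hy).1, Relation.EqvGen.symm _ _ (ihxy.2 hy).2⟩,
      fun hx => ⟨(ihxy.1 hx).1, Relation.EqvGen.symm _ _ (ihxy.1 hx).2⟩⟩
  | trans x y z _ _ ihxy ihyz =>
    refine ⟨fun hx => ?_, fun hz => ?_⟩
    · obtain ⟨hy, e1⟩ := ihxy.1 hx
      obtain ⟨hz, e2⟩ := ihyz.1 hy
      exact ⟨hz, Relation.EqvGen.trans _ _ _ e1 e2⟩
    · obtain ⟨hy, e2⟩ := ihyz.2 hz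
      obtain ⟨hx', e1⟩ := ihxy.2 hy
      exact ⟨hx', Relation.EqvGen.trans _ _ _ e1 e2⟩

lemma ck_to_knuth {w : Equiv.Perm ℕ} (h321 : ¬ Has321 w) {L M : List ℕ}
    (h : CKEquiv L M) :
    (IsReducedWordFor w L → IsReducedWordFor w M ∧ KnuthEquiv L M) ∧
    (IsReducedWordFor w M → IsReducedWordFor w L ∧ KnuthEquiv L M) := by
  induction h with
  | rel x y hxy =>
    exact ⟨fun hx => ⟨(ck_step_fwd h321 hxy hx).1,
        Relation.EqvGen.rel _ _ (ck_step_fwd h321 hxy hx).2⟩,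
      fun hy => ⟨(ck_step_bwd h321 hxy hy).1,
        Relation.EqvGen.rel _ _ (ck_step_bwd h321 hxy hy).2⟩⟩
  | refl x => exact ⟨fun h => ⟨h, Relation.EqvGen.refl x⟩,
      fun h => ⟨h, Relation.EqvGen.refl x⟩⟩
  | symm x y _ ihxy =>
    exact ⟨fun hy => ⟨(ihxy.2 hy).1, Relation.EqvGen.symm _ _ (ihxy.2 hy).2⟩,
      fun hx => ⟨(ihxy.1 hx).1, Relation.EqvGen.symm _ _ (ihxy.1 hx).2⟩⟩
  | trans x y z _ _ ihxy ihyz =>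
    refine ⟨fun hx => ?_, fun hz => ?_⟩
    · obtain ⟨hy, e1⟩ := ihxy.1 hx
      obtain ⟨hz, e2⟩ := ihyz.1 hy
      exact ⟨hz, Relation.EqvGen.trans _ _ _ e1 e2⟩
    · obtain ⟨hy, e2⟩ := ihyz.2 hz
      obtain ⟨hx', e1⟩ := ihxy.2 hy
      exact ⟨hx', Relation.EqvGen.trans _ _ _ e1 e2⟩


/-- `w` is 321-avoiding iff in every reduced word for `w`, between any two occurrences of
the same letter `i` there occur both a letter `i - 1` and a letter `i + 1`.  In particular,
if `w` is 321-avoiding then Coxeter–Knuth equivalence coincides with Knuth equivalence on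
reduced words for `w`. -/
theorem stmt13 (n : ℕ) (w : Equiv.Perm ℕ) (hw : IsPermOn n w) :
    ((¬ Has321 w) ↔
      ∀ L, IsReducedWordFor w L → ∀ p q, p < q → q < L.length →
        L.getD p 0 = L.getD q 0 →
        (∃ m, p < m ∧ m < q ∧ L.getD m 0 = L.getD p 0 - 1) ∧
        (∃ m, p < m ∧ m < q ∧ L.getD m 0 = L.getD p 0 + 1)) ∧
    (¬ Has321 w →
      ∀ L M, IsReducedWordFor w L → IsReducedWordFor w M →
        (CKEquiv L M ↔ KnuthEquiv L M)) := by
  constructor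
  · constructor
    · intro h321 L hred p q hpq hq he
      exact part1_forward h321 hred hpq hq he
    · intro hall
      by_contra h3
      exact part1_backward ⟨n, hw⟩ h3 hall
  · intro h321 L M hL hM
    constructor
    · intro h
      exact ((ck_to_knuth h321 h).1 hL).2
    · intro h
      exact ((knuth_to_ck h321 h).1 hL).2
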